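/- Let ξ be a real irrational number. Then τ(ξ) ≤ 1/(μ(ξ) − 1), where τ(ξ) = sup T(ξ) (with sup ∅ = 0) and T(ξ) is the set of all τ > 0 for which there exist integer sequences (u_n), (v_n) with u_n ≠ 0 for all n, u_n ξ − v_n → 0, |u_{n+1} ξ − v_{n+1}| = |u_n ξ − v_n|^{1 + o(1)}, and |u_n ξ − v_n| ≤ |u_n|^{−τ + o(1)}. -/

import Mathlib

open Filter Topology

/-- The irrationality exponent of a real number, as an extended real:
the infimum of all real `μ` such that `|ξ - p/q| > 1/q^μ` for all integers `p, q`
with `q` sufficiently large (`⊤` if no such real `μ` exists). -/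
noncomputable def irrationalityExponent (ξ : ℝ) : EReal :=
  sInf {x : EReal | ∃ μ : ℝ, x = (μ : EReal) ∧
    ∀ᶠ q : ℕ in atTop, ∀ p : ℤ, |ξ - (p : ℝ) / (q : ℝ)| > 1 / (q : ℝ) ^ μ}

/-- The set `T(ξ)` of all `τ > 0` for which there exist integer sequences `(u_n)`, `(v_n)`
with `u_n ≠ 0`, `u_n ξ - v_n → 0`, `|u_{n+1} ξ - v_{n+1}| = |u_n ξ - v_n|^{1+o(1)}` and
`|u_n ξ - v_n| ≤ |u_n|^{-τ+o(1)}`. -/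
def TSet (ξ : ℝ) : Set ℝ :=
  {τ : ℝ | 0 < τ ∧ ∃ u v : ℕ → ℤ, (∀ n, u n ≠ 0) ∧
    Tendsto (fun n => (u n : ℝ) * ξ - (v n : ℝ)) atTop (𝓝 0) ∧
    (∃ δ : ℕ → ℝ, Tendsto δ atTop (𝓝 0) ∧ ∀ n,
      |(u (n + 1) : ℝ) * ξ - (v (n + 1) : ℝ)| = |(u n : ℝ) * ξ - (v n : ℝ)| ^ (1 + δ n)) ∧
    (∃ δ : ℕ → ℝ, Tendsto δ atTop (𝓝 0) ∧ ∀ n,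
      |(u n : ℝ) * ξ - (v n : ℝ)| ≤ |(u n : ℝ)| ^ (-τ + δ n))}

/-- The set `T'(ξ)` of all `τ > 0` for which there exist integer sequences `(u_n)`, `(v_n)`
and `0 < α < 1 < β` with `|u_n ξ - v_n|^{1/n} → α`, `limsup |u_n|^{1/n} ≤ β` and
`τ = -log α / log β`. -/
def TSet' (ξ : ℝ) : Set ℝ :=
  {τ : ℝ | 0 < τ ∧ ∃ u v : ℕ → ℤ, ∃ α β : ℝ, 0 < α ∧ α < 1 ∧ 1 < β ∧
    Tendsto (fun n => |(u n : ℝ) * ξ - (v n : ℝ)| ^ (1 / (n : ℝ))) atTop (𝓝 α) ∧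
    limsup (fun n => ((|(u n : ℝ)| ^ (1 / (n : ℝ)) : ℝ) : EReal)) atTop ≤ (β : EReal) ∧
    τ = -Real.log α / Real.log β}

/-- The set `T''(ξ)` of all `τ > 0` such that, for any increasing sequence `(Q_n)` of
positive integers, there exist integer sequences `(u_n)`, `(v_n)` with
`|u_n| ≤ Q_n^{1+o(1)}` and `|u_n ξ - v_n| = Q_n^{-τ+o(1)}`. -/
def TSet'' (ξ : ℝ) : Set ℝ :=
  {τ : ℝ | 0 < τ ∧ ∀ Q : ℕ → ℕ, StrictMono Q → (∀ n, 0 < Q n) →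
    ∃ u v : ℕ → ℤ,
      (∃ δ : ℕ → ℝ, Tendsto δ atTop (𝓝 0) ∧ ∀ n,
        |(u n : ℝ)| ≤ (Q n : ℝ) ^ (1 + δ n)) ∧
      (∃ δ : ℕ → ℝ, Tendsto δ atTop (𝓝 0) ∧ ∀ n,
        |(u n : ℝ) * ξ - (v n : ℝ)| = (Q n : ℝ) ^ (-τ + δ n))}

/-- The set `T'''(ξ)` of all `τ > 0` such that, for any sequences `(Q_n)`, `(ε_n)` of
positive real numbers with `Q_n → ∞`, `ε_n → 0` and `ε_n ≥ Q_n^{-τ+o(1)}`, there exist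
integer sequences `(u_n)`, `(v_n)` with `u_n / Q_n → 1` and `(u_n ξ - v_n)/ε_n → 1`. -/
def TSet''' (ξ : ℝ) : Set ℝ :=
  {τ : ℝ | 0 < τ ∧ ∀ Q ε : ℕ → ℝ, (∀ n, 0 < Q n) → (∀ n, 0 < ε n) →
    Tendsto Q atTop atTop → Tendsto ε atTop (𝓝 0) →
    (∃ δ : ℕ → ℝ, Tendsto δ atTop (𝓝 0) ∧ ∀ n, ε n ≥ Q n ^ (-τ + δ n)) →
    ∃ u v : ℕ → ℤ,
      Tendsto (fun n => (u n : ℝ) / Q n) atTop (𝓝 1) ∧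
      Tendsto (fun n => ((u n : ℝ) * ξ - (v n : ℝ)) / ε n) atTop (𝓝 1)}

/-- `τ(ξ) = sup T(ξ)` (with `sup ∅ = 0`, as for the real `sSup`). -/
noncomputable def tauExp (ξ : ℝ) : ℝ := sSup (TSet ξ)

/-- `τ'(ξ) = sup T'(ξ)` (with `sup ∅ = 0`, as for the real `sSup`). -/
noncomputable def tauExp' (ξ : ℝ) : ℝ := sSup (TSet' ξ)

/-- `τ''(ξ) = sup T''(ξ)` (with `sup ∅ = 0`, as for the real `sSup`). -/
noncomputable def tauExp'' (ξ : ℝ) : ℝ := sSup (TSet'' ξ)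

/-- `τ'''(ξ) = sup T'''(ξ)` (with `sup ∅ = 0`, as for the real `sSup`). -/
noncomputable def tauExp''' (ξ : ℝ) : ℝ := sSup (TSet''' ξ)

/-!
Let `τ ∈ T(ξ)` with sequences `(u_n, v_n)`, write `L_n = |u_n ξ - v_n|`, and let `p/q` satisfy
`|ξ - p/q| ≤ q^{-μ}` with `q` large. Take `n` with `L_{n+1} < 1/(2q) ≤ L_n`. Since
`L_{n+1} = L_n^{1+o(1)}`, we have `L_{n+1} ≥ (2q)^{-1-o(1)}`, so `|u_{n+1}| ≤ q^{1/τ+o(1)}`.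
The integer `u_{n+1} p - v_{n+1} q` is either `0` or at least `1` in absolute value; in both cases
`q L_{n+1} ≤ |u_{n+1}| |qξ - p|`, so that `q^{μ-1-o(1)} ≤ |u_{n+1}|`. Hence `μ ≤ 1 + 1/τ + o(1)`,
so `μ(ξ) ≤ 1 + 1/τ`. Dirichlet's theorem gives `μ(ξ) ≥ 2`, which makes the inversion legitimate.
-/

open Real

def IsIrrationalityMeasure (ξ μ : ℝ) : Prop :=
  ∀ᶠ q : ℕ in atTop, ∀ p : ℤ, |ξ - (p : ℝ) / (q : ℝ)| > 1 / (q : ℝ) ^ μ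

theorem irrationalityExponent_le {ξ μ : ℝ} (h : IsIrrationalityMeasure ξ μ) :
    irrationalityExponent ξ ≤ μ :=
  sInf_le ⟨μ, rfl, h⟩

theorem le_irrationalityExponent {ξ : ℝ} {a : EReal}
    (h : ∀ μ, IsIrrationalityMeasure ξ μ → a ≤ μ) : a ≤ irrationalityExponent ξ :=
  le_sInf <| by rintro _ ⟨μ, rfl, hμ⟩; exact h μ hμ

theorem two_le_of_isIrrationalityMeasure {ξ μ : ℝ} (hξ : Irrational ξ)
    (h : IsIrrationalityMeasure ξ μ) : 2 ≤ μ := by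
  by_contra! hμ
  obtain ⟨Q, hQ⟩ := eventually_atTop.1 h
  have hfar : ∀ᶠ n : ℕ in atTop,
      ∀ k ∈ Set.Ioo 0 Q, 1 / ((n : ℝ) + 1) < |k * ξ - round (k * ξ)| :=
    (Set.finite_Ioo 0 Q).eventually_all.2 fun k hk =>
      tendsto_one_div_add_atTop_nhds_zero_nat.eventually <| eventually_lt_nhds <|
        abs_pos.2 <| sub_ne_zero.2 <| (hξ.natCast_mul hk.1.ne').ne_int _
  obtain ⟨n, hn, hn0⟩ := (hfar.and (eventually_gt_atTop 0)).exists
  obtain ⟨k, hk0, hkn, hk⟩ := exists_nat_abs_mul_sub_round_le ξ hn0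
  have hQk : Q ≤ k := by
    by_contra! hkQ
    exact (hn k ⟨hk0, hkQ⟩).not_ge hk
  refine (hQ k hQk (round (k * ξ))).not_ge ?_
  calc |ξ - (round (k * ξ) : ℝ) / k| = |(k * ξ - round (k * ξ)) / k| := by
        rw [sub_div, mul_div_cancel_left₀ _ (by positivity)]
    _ = |k * ξ - round (k * ξ)| / k := by rw [abs_div, Nat.abs_cast]
    _ ≤ 1 / ((n + 1) * k) := by
        rw [← div_div]; gcongr
    _ ≤ 1 / k ^ (2 : ℝ) := by
        rw [rpow_two]; gcongr
        have : (k : ℝ) ≤ n := by exact_mod_cast hkn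
        nlinarith
    _ ≤ 1 / k ^ μ := by gcongr; exact_mod_cast hk0

theorem two_le_irrationalityExponent {ξ : ℝ} (hξ : Irrational ξ) : 2 ≤ irrationalityExponent ξ :=
  le_irrationalityExponent fun _ hμ =>
    EReal.coe_le_coe_iff.2 (two_le_of_isIrrationalityMeasure hξ hμ)

theorem abs_mul_abs_sub_le_of_le_half {ξ : ℝ} {u v p q : ℤ}
    (h : |(q : ℝ)| * |u * ξ - v| ≤ 1 / 2) :
    |(q : ℝ)| * |u * ξ - v| ≤ |(u : ℝ)| * |q * ξ - p| := by
  have hsplit : ((u * p - v * q : ℤ) : ℝ) = -(u * (q * ξ - p)) + q * (u * ξ - v) := by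
    push_cast; ring
  rcases eq_or_ne (u * p - v * q) 0 with hD | hD
  · rw [hD, Int.cast_zero, eq_comm, neg_add_eq_zero] at hsplit
    rw [← abs_mul, ← abs_mul, hsplit]
  · have h1 : (1 : ℝ) ≤ |((u * p - v * q : ℤ) : ℝ)| := by exact_mod_cast Int.one_le_abs hD
    have h2 := abs_add_le (-(u * (q * ξ - p) : ℝ)) (q * (u * ξ - v))
    rw [← hsplit, abs_neg, abs_mul, abs_mul] at h2
    linarith

theorem abs_mul_sub_mul_rpow_le {ξ μ : ℝ} {u v p : ℤ} {q : ℕ} (hq : 0 < q)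
    (hsmall : q * |u * ξ - v| ≤ 1 / 2) (hp : |ξ - p / q| ≤ 1 / q ^ μ) :
    |u * ξ - v| * q ^ μ ≤ |(u : ℝ)| := by
  have hqR : (0 : ℝ) < q := by exact_mod_cast hq
  have hlin := abs_mul_abs_sub_le_of_le_half (p := p) (q := q) (by simpa using hsmall)
  have he : |(q : ℝ) * ξ - p| = q * |ξ - p / q| := by
    rw [show (q : ℝ) * ξ - p = q * (ξ - p / q) by field_simp, abs_mul, Nat.abs_cast]
  rw [Int.cast_natCast, Nat.abs_cast, he] at hlin
  have hp' := (le_div_iff₀ (rpow_pos_of_pos hqR μ)).1 hp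
  refine le_of_mul_le_mul_left ?_ hqR
  calc (q : ℝ) * (|u * ξ - v| * q ^ μ) = q * |u * ξ - v| * q ^ μ := by ring
    _ ≤ |(u : ℝ)| * (q * |ξ - p / q|) * q ^ μ := by gcongr
    _ = q * |(u : ℝ)| * (|ξ - p / q| * q ^ μ) := by ring
    _ ≤ q * |(u : ℝ)| * 1 := by gcongr
    _ = q * |(u : ℝ)| := mul_one _

theorem eventually_exists_succ_lt_le {L : ℕ → ℝ} {P : ℕ → Prop} (hpos : ∀ n, 0 < L n)
    (hL : Tendsto L atTop (𝓝 0)) (hP : ∀ᶠ n in atTop, P n) :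
    ∀ᶠ x in 𝓝[>] 0, ∃ n, P n ∧ L (n + 1) < x ∧ x ≤ L n := by
  obtain ⟨N, hN⟩ := eventually_atTop.1 hP
  have hsmall : ∀ᶠ x in 𝓝[>] (0 : ℝ), ∀ j ∈ Set.Iic N, x < L j :=
    (Set.finite_Iic N).eventually_all.2 fun j _ =>
      nhdsWithin_le_nhds (eventually_lt_nhds (hpos j))
  filter_upwards [hsmall, self_mem_nhdsWithin] with x hx (hx0 : 0 < x)
  have hex : ∃ k, L k < x := (hL.eventually (eventually_lt_nhds hx0)).exists
  have hNk : N < Nat.find hex := by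
    by_contra! hk
    exact (Nat.find_spec hex).not_gt (hx _ hk)
  refine ⟨Nat.find hex - 1, hN _ (by omega), ?_, ?_⟩
  · rw [Nat.sub_add_cancel (by omega)]
    exact Nat.find_spec hex
  · exact not_lt.1 (Nat.find_min hex (by omega))

theorem eventually_mul_log_le_log_succ {L δ : ℕ → ℝ} (hpos : ∀ n, 0 < L n)
    (hL : Tendsto L atTop (𝓝 0)) (hδ : Tendsto δ atTop (𝓝 0))
    (h : ∀ n, L (n + 1) = L n ^ (1 + δ n)) {η : ℝ} (hη : 0 < η) :
    ∀ᶠ n in atTop, (1 + η) * log (L n) ≤ log (L (n + 1)) := by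
  filter_upwards [hδ.eventually (eventually_lt_nhds hη),
    hL.eventually (eventually_lt_nhds one_pos)] with n hδn hL1
  rw [h n, log_rpow (hpos n)]
  nlinarith [log_neg (hpos n) hL1]

theorem eventually_log_le_mul_log {ι : Type*} {l : Filter ι} {L U δ : ι → ℝ} {c η : ℝ}
    (hpos : ∀ i, 0 < L i) (hU : ∀ i, 1 ≤ U i) (hδ : Tendsto δ l (𝓝 0))
    (h : ∀ i, L i ≤ U i ^ (c + δ i)) (hη : 0 < η) :
    ∀ᶠ i in l, log (L i) ≤ (c + η) * log (U i) := by
  filter_upwards [hδ.eventually (eventually_lt_nhds hη)] with i hδi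
  calc log (L i) ≤ log (U i ^ (c + δ i)) := log_le_log (hpos i) (h i)
    _ = (c + δ i) * log (U i) := log_rpow (by linarith [hU i]) _
    _ ≤ (c + η) * log (U i) := by nlinarith [log_nonneg (hU i)]

/-- The last inequality says `μ > 1 + η + (1 + η) / (τ - η)`: the bound `μ > 1 + 1 / τ` with the
`o(1)` terms in the definition of `T(ξ)` replaced by `η`. -/
theorem exists_pos_lt_of_one_add_inv_lt {τ μ : ℝ} (hτ : 0 < τ) (hμ : 1 + τ⁻¹ < μ) :
    ∃ η, 0 < η ∧ η < τ ∧ (1 + η) * (1 + τ - η) < (τ - η) * μ := by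
  have h0 : (1 + 0) * (1 + τ - 0) < (τ - 0) * μ := by
    have := mul_lt_mul_of_pos_left hμ hτ
    rw [mul_add, mul_inv_cancel₀ hτ.ne'] at this
    linarith
  obtain ⟨η, ⟨hητ, hημ⟩, hη⟩ : ∃ η, (η < τ ∧ (1 + η) * (1 + τ - η) < (τ - η) * μ) ∧ 0 < η :=
    ((eventually_lt_nhds hτ).and
    (ContinuousAt.eventually_lt (by fun_prop) (by fun_prop) h0) |>.filter_mono
      nhdsWithin_le_nhds |>.and (self_mem_nhdsWithin (s := Set.Ioi 0))).exists
  exact ⟨η, hη, hητ, hημ⟩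

theorem isIrrationalityMeasure_of_mem_TSet {ξ τ μ : ℝ} (hξ : Irrational ξ) (hτ : τ ∈ TSet ξ)
    (hμ : 1 + τ⁻¹ < μ) : IsIrrationalityMeasure ξ μ := by
  obtain ⟨hτ0, u, v, hu, hL, ⟨δ₁, hδ₁, h₁⟩, ⟨δ₂, hδ₂, h₂⟩⟩ := hτ
  set L : ℕ → ℝ := fun n => |u n * ξ - v n|
  have hLpos (n : ℕ) : 0 < L n :=
    abs_pos.2 <| sub_ne_zero.2 <| (hξ.intCast_mul (hu n)).ne_int _
  have hL0 : Tendsto L atTop (𝓝 0) := by simpa using hL.abs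
  obtain ⟨η, hη, hητ, hημ⟩ := exists_pos_lt_of_one_add_inv_lt hτ0 hμ
  have hsize := eventually_log_le_mul_log (U := fun n => |(u n : ℝ)|) hLpos
    (fun n => by exact_mod_cast Int.one_le_abs (hu n)) hδ₂ h₂ hη
  have hbracket : ∀ᶠ q : ℕ in atTop, ∃ n, ((1 + η) * log (L n) ≤ log (L (n + 1)) ∧
      log (L (n + 1)) ≤ (-τ + η) * log |(u (n + 1) : ℝ)|) ∧
      L (n + 1) < (2 * q : ℝ)⁻¹ ∧ (2 * q : ℝ)⁻¹ ≤ L n :=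
    (tendsto_inv_atTop_nhdsGT_zero.comp
      (tendsto_natCast_atTop_atTop.const_mul_atTop two_pos)).eventually
      (eventually_exists_succ_lt_le hLpos hL0
        ((eventually_mul_log_le_log_succ hLpos hL0 hδ₁ h₁ hη).and
          ((tendsto_add_atTop_nat 1).eventually hsize)))
  have hlarge : ∀ᶠ q : ℕ in atTop,
      (1 + η) * (1 + τ - η) * log 2 < ((τ - η) * μ - (1 + η) * (1 + τ - η)) * log q :=
    ((tendsto_log_atTop.comp tendsto_natCast_atTop_atTop).const_mul_atTop
      (sub_pos.2 hημ)).eventually_gt_atTop _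
  filter_upwards [hbracket, hlarge, eventually_gt_atTop 0]
    with q ⟨n, ⟨hstep, hbound⟩, hlt, hle⟩ hq hq0 p
  by_contra! hp
  have hqR : (0 : ℝ) < q := by exact_mod_cast hq0
  have hU : log (L (n + 1)) + μ * log q ≤ log |(u (n + 1) : ℝ)| := by
    have hsmall : q * L (n + 1) ≤ 1 / 2 := by
      calc (q : ℝ) * L (n + 1) ≤ q * (2 * q : ℝ)⁻¹ := by gcongr
        _ = 1 / 2 := by field_simp
    rw [← log_rpow hqR, ← log_mul (hLpos _).ne' (rpow_pos_of_pos hqR μ).ne']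
    exact log_le_log (mul_pos (hLpos _) (rpow_pos_of_pos hqR μ))
      (abs_mul_sub_mul_rpow_le hq0 hsmall hp)
  have hℓ : -(1 + η) * (log 2 + log q) ≤ log (L (n + 1)) :=
    calc -(1 + η) * (log 2 + log q) = (1 + η) * log (2 * q : ℝ)⁻¹ := by
          rw [log_inv, log_mul two_ne_zero hqR.ne']; ring
      _ ≤ (1 + η) * log (L n) := by gcongr
      _ ≤ _ := hstep
  -- with `hbound`: `(τ - η) μ log q ≤ (1 + η) (1 + τ - η) log (2q)`, against `hq`
  have := mul_le_mul_of_nonneg_left hU (sub_nonneg.2 hητ.le)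
  have := mul_le_mul_of_nonneg_left hℓ (by linarith : 0 ≤ 1 + τ - η)
  linarith

theorem irrationalityExponent_le_one_add_inv {ξ τ : ℝ} (hξ : Irrational ξ) (hτ : τ ∈ TSet ξ) :
    irrationalityExponent ξ ≤ ((1 + τ⁻¹ : ℝ) : EReal) := by
  refine le_of_forall_gt_imp_ge_of_dense fun a ha => ?_
  induction a using EReal.rec with
  | bot => exact (not_lt_bot ha).elim
  | top => exact le_top
  | coe μ =>
    exact irrationalityExponent_le <|
      isIrrationalityMeasure_of_mem_TSet hξ hτ (EReal.coe_lt_coe_iff.1 ha)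

theorem tau_le_inv_mu_sub_one (ξ : ℝ) (hξ : Irrational ξ) :
    ((tauExp ξ : ℝ) : EReal) ≤ (irrationalityExponent ξ - 1)⁻¹ := by
  have hT := fun τ (hτ : τ ∈ TSet ξ) => irrationalityExponent_le_one_add_inv hξ hτ
  have h2 := two_le_irrationalityExponent hξ
  generalize irrationalityExponent ξ = μ at hT h2 ⊢
  induction μ using EReal.rec with
  | bot => exact ((EReal.bot_lt_coe 2).not_ge h2).elim
  | top =>
    have hempty : TSet ξ = ∅ :=
      Set.eq_empty_of_forall_notMem fun τ hτ => (EReal.coe_lt_top _).not_ge (hT τ hτ)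
    rw [tauExp, hempty, Real.sSup_empty, EReal.coe_zero]
    exact EReal.inv_nonneg_of_nonneg le_top
  | coe μ =>
    have hμ : (2 : ℝ) ≤ μ := EReal.coe_le_coe_iff.1 h2
    rw [← EReal.coe_one, ← EReal.coe_sub, ← EReal.coe_inv, EReal.coe_le_coe_iff]
    refine Real.sSup_le (fun τ hτ => ?_) (inv_nonneg.2 (by linarith))
    have hμτ : μ ≤ 1 + τ⁻¹ := EReal.coe_le_coe_iff.1 (hT τ hτ)
    rw [le_inv_comm₀ hτ.1 (by linarith)]
    linarith
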